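/- arXiv:0905.1318 — 3 statements merged into one kernel-verified Lean document; each statement's English description precedes it below -/
import Mathlib

section
/- Let A = [[1,1],[0,1]] and B = [[1,0],[e^{πi/3},1]] in SL₂(ℂ). Then |tr²A − 4| + |tr[A,B] − 2| = 1, where [A,B] = ABA⁻¹B⁻¹. -/
open Matrix Complex

theorem stmt_0 (A B : Matrix.SpecialLinearGroup (Fin 2) ℂ)
    (hA : (A : Matrix (Fin 2) (Fin 2) ℂ) = !![1, 1; 0, 1])
    (hB : (B : Matrix (Fin 2) (Fin 2) ℂ) =
      !![1, 0; Complex.exp (Real.pi * Complex.I / 3), 1]) :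
    ‖(Matrix.trace (A : Matrix (Fin 2) (Fin 2) ℂ)) ^ 2 - 4‖ +
      ‖
        (Matrix.trace ((A * B * A⁻¹ * B⁻¹ : Matrix.SpecialLinearGroup (Fin 2) ℂ) :
          Matrix (Fin 2) (Fin 2) ℂ) - 2)‖ = 1 := by
  set c := Complex.exp (Real.pi * Complex.I / 3) with hc
  have h1 : Matrix.trace (A : Matrix (Fin 2) (Fin 2) ℂ) = 2 := by
    rw [hA]; simp [Matrix.trace_fin_two]; ring
  have h2 : Matrix.trace ((A * B * A⁻¹ * B⁻¹ : Matrix.SpecialLinearGroup (Fin 2) ℂ) :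
      Matrix (Fin 2) (Fin 2) ℂ) = 2 + c ^ 2 := by
    simp only [Matrix.SpecialLinearGroup.coe_mul, Matrix.SpecialLinearGroup.coe_inv,
      hA, hB, Matrix.adjugate_fin_two_of]
    simp [Matrix.trace_fin_two, Matrix.mul_apply, Fin.sum_univ_succ]
    ring
  rw [h1, h2]
  have habs : ‖c ^ 2‖ = 1 := by
    rw [norm_pow, hc, Complex.norm_exp]
    simp [mul_comm]
  rw [show (2 : ℂ) ^ 2 - 4 = 0 by ring, show (2 : ℂ) + c ^ 2 - 2 = c ^ 2 by ring,
    habs, norm_zero, zero_add]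
end

section
/- Let A = [[1,1],[0,1]] and, for θ ∈ ℝ, k ∈ ℝ, let B = [[0, −ie^{−iθ}],[−ie^{iθ}, 2ke^{iθ}]]. Then |tr²A − 4| + |tr(ABA⁻¹B⁻¹) − 2| = 1, i.e., the pair (A, B) has Jørgensen number 1. -/
open Matrix Complex

theorem stmt_4 (θ k : ℝ) (A B : Matrix.SpecialLinearGroup (Fin 2) ℂ)
    (hA : (A : Matrix (Fin 2) (Fin 2) ℂ) = !![1, 1; 0, 1])
    (hB : (B : Matrix (Fin 2) (Fin 2) ℂ) =
      !![0, -Complex.I * Complex.exp (-Complex.I * θ);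
         -Complex.I * Complex.exp (Complex.I * θ),
         2 * k * Complex.exp (Complex.I * θ)]) :
    ‖(Matrix.trace (A : Matrix (Fin 2) (Fin 2) ℂ)) ^ 2 - 4‖ +
      ‖Matrix.trace ((A * B * A⁻¹ * B⁻¹ : Matrix.SpecialLinearGroup (Fin 2) ℂ) :
          Matrix (Fin 2) (Fin 2) ℂ) - 2‖ = 1 := by
  have he : Complex.exp (Complex.I * θ) * Complex.exp (-(Complex.I * θ)) = 1 := by
    rw [← Complex.exp_add]; ring_nf; exact Complex.exp_zero
  have h1 : Matrix.trace ((A * B * A⁻¹ * B⁻¹ : Matrix.SpecialLinearGroup (Fin 2) ℂ) :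
      Matrix (Fin 2) (Fin 2) ℂ) - 2 = -(Complex.exp (Complex.I * θ))^2 := by
    simp only [Matrix.SpecialLinearGroup.coe_mul, Matrix.SpecialLinearGroup.coe_inv,
      hA, hB, Matrix.adjugate_fin_two]
    simp [Matrix.trace_fin_two, Matrix.mul_fin_two, neg_mul]
    linear_combination (2 : ℂ) * he + (Complex.exp (Complex.I * θ)^2
      - 2*Complex.exp (Complex.I * θ)*Complex.exp (-(Complex.I * θ))) * Complex.I_sq
  have h2 : Matrix.trace (A : Matrix (Fin 2) (Fin 2) ℂ) = 2 := by
    simp [hA, Matrix.trace_fin_two]; norm_num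
  rw [h1, h2]
  norm_num [map_pow, Complex.norm_exp]
end

section
/- Let A = [[1,1],[0,1]] and B = [[0, −e^{πi/4}],[e^{−πi/4}, λ]] with λ = m e^{πi/4} for some integer m (so Γ = ⟨A,B⟩ is the group G_{π/4, m/2}). Then tr[A,B] − 2 = e^{−πi/2} = −i, and |tr²A − 4| + |tr[A,B] − 2| = 1. -/
open Matrix Complex

theorem stmt_14 (m : ℤ) (A B : Matrix.SpecialLinearGroup (Fin 2) ℂ)
    (hA : (A : Matrix (Fin 2) (Fin 2) ℂ) = !![1, 1; 0, 1])
    (hB : (B : Matrix (Fin 2) (Fin 2) ℂ) =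
      !![0, -Complex.exp (Real.pi * Complex.I / 4);
         Complex.exp (-(Real.pi * Complex.I / 4)),
         m * Complex.exp (Real.pi * Complex.I / 4)]) :
    Matrix.trace ((A * B * A⁻¹ * B⁻¹ : Matrix.SpecialLinearGroup (Fin 2) ℂ) :
        Matrix (Fin 2) (Fin 2) ℂ) - 2 = -Complex.I ∧
    ‖((Matrix.trace (A : Matrix (Fin 2) (Fin 2) ℂ)) ^ 2 - 4)‖ +
      ‖
        (Matrix.trace ((A * B * A⁻¹ * B⁻¹ : Matrix.SpecialLinearGroup (Fin 2) ℂ) :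
          Matrix (Fin 2) (Fin 2) ℂ) - 2)‖ = 1 := by
  have h1 : Complex.exp (-(Real.pi * Complex.I / 4)) * Complex.exp (Real.pi * Complex.I / 4) = 1 := by
    rw [← Complex.exp_add]
    ring_nf
    exact Complex.exp_zero
  have h2 : Complex.exp (-(Real.pi * Complex.I / 4)) * Complex.exp (-(Real.pi * Complex.I / 4)) = -Complex.I := by
    rw [← Complex.exp_add]
    have h : -(↑Real.pi * Complex.I / 4) + -(↑Real.pi * Complex.I / 4) = (↑(-(Real.pi/2)) : ℂ) * Complex.I := by
      push_cast; ring
    rw [h, Complex.exp_mul_I]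
    simp
  have key : Matrix.trace ((A * B * A⁻¹ * B⁻¹ : Matrix.SpecialLinearGroup (Fin 2) ℂ) :
        Matrix (Fin 2) (Fin 2) ℂ) - 2 = -Complex.I := by
    simp only [Matrix.SpecialLinearGroup.coe_mul, Matrix.SpecialLinearGroup.coe_inv, hA, hB,
      Matrix.adjugate_fin_two_of, Matrix.mul_fin_two, Matrix.trace_fin_two_of]
    linear_combination 2 * h1 + h2
  refine ⟨key, ?_⟩
  rw [key, hA, Matrix.trace_fin_two]
  norm_num
end
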